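/- arXiv:math/0611588 — 2 statements merged into one kernel-verified Lean document; each statement's English description precedes it below -/
import Mathlib

section
/- Let Γ be a finite simple graph and S a subset of V(Γ). The natural homomorphism from the right-angled Artin group A(Γ_S) on the induced subgraph Γ_S to A(Γ), sending each vertex of S to itself, is injective; thus the subgroup of A(Γ) generated by S is isomorphic to A(Γ_S). -/
open SimpleGraph

variable {V : Type*}

/-- Relators of the right-angled Artin group on a graph. -/
def raagRels (G : SimpleGraph V) : Set (FreeGroup V) :=
  {r | ∃ a b : V, G.Adj a b ∧
    r = FreeGroup.of a * FreeGroup.of b * (FreeGroup.of a)⁻¹ * (FreeGroup.of b)⁻¹}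

/-- The right-angled Artin group on a graph. -/
def RAAG (G : SimpleGraph V) : Type _ := PresentedGroup (raagRels G)

instance (G : SimpleGraph V) : Group (RAAG G) := by unfold RAAG; infer_instance

/-- The generator of `RAAG G` corresponding to a vertex. -/
def RAAG.gen (G : SimpleGraph V) (v : V) : RAAG G := PresentedGroup.of v

/-- The element of `RAAG G` represented by a word. -/
def wordProd (G : SimpleGraph V) (w : List (V × Bool)) : RAAG G :=
  (w.map fun p => if p.2 then RAAG.gen G p.1 else (RAAG.gen G p.1)⁻¹).prod

/-- A word is reduced if no shorter word represents the same element. -/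
def IsReducedWord (G : SimpleGraph V) (w : List (V × Bool)) : Prop :=
  ∀ w' : List (V × Bool), wordProd G w' = wordProd G w → w.length ≤ w'.length

/-- `B` is anticonnected in `G` if it induces a connected subgraph of the complement. -/
def Anticonnected (G : SimpleGraph V) (B : Set V) : Prop :=
  ((Gᶜ).induce B).Connected

/-- Contraction of a graph relative to a set `B` of vertices: `B` collapses to
the vertex `none`. -/
def SimpleGraph.contract (G : SimpleGraph V) (B : Set V) :
    SimpleGraph (Option {v : V // v ∉ B}) where
  Adj x y :=
    match x, y with
    | some q, some q' => G.Adj q.1 q'.1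
    | some q, none => ∃ b ∈ B, G.Adj q.1 b
    | none, some q => ∃ b ∈ B, G.Adj q.1 b
    | none, none => False
  symm := ⟨by
    rintro (_|q) (_|q') h
    · exact h
    · exact h
    · exact h
    · exact G.adj_symm h⟩
  loopless := ⟨by
    rintro (_|q) h
    · exact h
    · exact G.irrefl h⟩

/-- Co-contraction of a graph relative to a set `B` of vertices: `B` collapses to
the vertex `none`, which is joined to the common neighbors of `B`. -/
def SimpleGraph.coContract (G : SimpleGraph V) (B : Set V) :
    SimpleGraph (Option {v : V // v ∉ B}) where
  Adj x y :=
    match x, y with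
    | some q, some q' => G.Adj q.1 q'.1
    | some q, none => ∀ b ∈ B, G.Adj q.1 b
    | none, some q => ∀ b ∈ B, G.Adj q.1 b
    | none, none => False
  symm := ⟨by
    rintro (_|q) (_|q') h
    · exact h
    · exact h
    · exact h
    · exact G.adj_symm h⟩
  loopless := ⟨by
    rintro (_|q) h
    · exact h
    · exact G.irrefl h⟩

/-- The formal inverse of a word. -/
def wordInv (w : List (V × Bool)) : List (V × Bool) :=
  w.reverse.map fun p => (p.1, !p.2)

/-- The word obtained by concatenating `m` copies of `v` (or `|m|` copies of the
inverse word when `m < 0`). -/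
def wordZPow (v : List (V × Bool)) : ℤ → List (V × Bool)
  | Int.ofNat m => (List.replicate m v).flatten
  | Int.negSucc m => (List.replicate (m + 1) (wordInv v)).flatten

/-- A sequence of vertices of `B` is a contraction sequence if for every pair
`b, b'` of vertices of `B` it has a subsequence which is a path from `b` to `b'`
in the complement graph. -/
def IsContractionSeq (G : SimpleGraph V) (B : Set V) (bs : List V) : Prop :=
  ∀ b ∈ B, ∀ b' ∈ B, ∃ l : List V, l.Sublist bs ∧ l.head? = some b ∧
    l.getLast? = some b' ∧ l.Chain' (fun x y => x ≠ y ∧ ¬ G.Adj x y)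

/-- A contraction word of `B`: a reduced word with letters in `B^{±1}` whose
sequence of letters is a contraction sequence. -/
def IsContractionWord (G : SimpleGraph V) (B : Set V) (w : List (V × Bool)) : Prop :=
  IsReducedWord G w ∧ (∀ p ∈ w, p.1 ∈ B) ∧ IsContractionSeq G B (w.map Prod.fst)

/-- A contraction element of `B` is one represented by a contraction word of `B`. -/
def IsContractionElem (G : SimpleGraph V) (B : Set V) (g : RAAG G) : Prop :=
  ∃ w : List (V × Bool), IsContractionWord G B w ∧ wordProd G w = g
lemma raag_gen_comm {G : SimpleGraph V} {a b : V} (h : G.Adj a b) :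
    RAAG.gen G a * RAAG.gen G b * (RAAG.gen G a)⁻¹ * (RAAG.gen G b)⁻¹ = 1 := by
  have : (FreeGroup.of a * FreeGroup.of b * (FreeGroup.of a)⁻¹ * (FreeGroup.of b)⁻¹) ∈
      Subgroup.normalClosure (raagRels G) :=
    Subgroup.subset_normalClosure ⟨a, b, h, rfl⟩
  exact (QuotientGroup.eq_one_iff _).2 this

theorem raag_induce_embeds {V : Type*} (G : SimpleGraph V) (S : Set V) :
    ∃ φ : RAAG (G.induce S) →* RAAG G,
      (∀ s : S, φ (RAAG.gen (G.induce S) s) = RAAG.gen G s.1) ∧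
      Function.Injective φ ∧
      φ.range = Subgroup.closure (RAAG.gen G '' S) := by
  classical
  have hφ : ∀ r ∈ raagRels (G.induce S),
      FreeGroup.lift (fun s : S => RAAG.gen G s.1) r = 1 := by
    rintro r ⟨a, b, hab, rfl⟩
    simp only [map_mul, map_inv, FreeGroup.lift_apply_of]
    exact raag_gen_comm hab
  set φ : RAAG (G.induce S) →* RAAG G := PresentedGroup.toGroup hφ with hφdef
  have hφof : ∀ s : S, φ (RAAG.gen (G.induce S) s) = RAAG.gen G s.1 := fun s =>
    PresentedGroup.toGroup.of hφ
  set f : V → RAAG (G.induce S) := fun v =>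
    if h : v ∈ S then RAAG.gen (G.induce S) ⟨v, h⟩ else 1 with hf
  have hψ : ∀ r ∈ raagRels G, FreeGroup.lift f r = 1 := by
    rintro r ⟨a, b, hab, rfl⟩
    simp only [map_mul, map_inv, FreeGroup.lift_apply_of, hf]
    by_cases ha : a ∈ S
    · by_cases hb : b ∈ S
      · rw [dif_pos ha, dif_pos hb]
        exact raag_gen_comm (show (G.induce S).Adj ⟨a, ha⟩ ⟨b, hb⟩ from hab)
      · rw [dif_neg hb]; group
    · rw [dif_neg ha]; group
  set ψ : RAAG G →* RAAG (G.induce S) := PresentedGroup.toGroup hψ with hψdef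
  have hli : ∀ x, ψ (φ x) = x := by
    have : ψ.comp φ = MonoidHom.id _ := by
      apply PresentedGroup.ext
      intro s
      change ψ (φ (RAAG.gen (G.induce S) s)) = RAAG.gen (G.induce S) s
      have h1 : φ (PresentedGroup.of s) = RAAG.gen G s.1 := hφof s
      have h2 : ψ (RAAG.gen G s.1) = f s.1 := PresentedGroup.toGroup.of hψ
      have h3 : f s.1 = RAAG.gen (G.induce S) s := by rw [hf]; exact dif_pos s.2
      exact (congrArg ψ h1).trans (h2.trans h3)
    intro x
    exact DFunLike.congr_fun this x
  refine ⟨φ, hφof, Function.LeftInverse.injective hli, ?_⟩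
  rw [MonoidHom.range_eq_map, (show (⊤ : Subgroup (RAAG (G.induce S))) = Subgroup.closure (Set.range (RAAG.gen (G.induce S))) from (PresentedGroup.closure_range_of _).symm),
    MonoidHom.map_closure]
  congr 1
  ext x
  constructor
  · rintro ⟨_, ⟨s, rfl⟩, rfl⟩
    exact ⟨s.1, s.2, (hφof s).symm⟩
  · rintro ⟨v, hv, rfl⟩
    exact ⟨PresentedGroup.of (⟨v, hv⟩ : S), ⟨_, rfl⟩, hφof ⟨v, hv⟩⟩
end

section
/- Let Γ be a finite simple graph and S ⊆ V(Γ). Every reduced word representing an element of the subgroup of A(Γ) generated by S uses only letters s^{±1} with s ∈ S. -/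
open SimpleGraph

variable {V : Type*}

lemma RAAG.gen_comm {G : SimpleGraph V} {a b : V} (h : G.Adj a b) :
    RAAG.gen G a * RAAG.gen G b = RAAG.gen G b * RAAG.gen G a := by
  have : (QuotientGroup.mk (FreeGroup.of a * FreeGroup.of b * (FreeGroup.of a)⁻¹ *
      (FreeGroup.of b)⁻¹) : PresentedGroup (raagRels G)) = 1 := by
    apply (QuotientGroup.eq_one_iff _).2
    exact Subgroup.subset_normalClosure ⟨a, b, h, rfl⟩
  have h2 : RAAG.gen G a * RAAG.gen G b * (RAAG.gen G a)⁻¹ * (RAAG.gen G b)⁻¹ = 1 := this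
  calc RAAG.gen G a * RAAG.gen G b
      = (RAAG.gen G a * RAAG.gen G b * (RAAG.gen G a)⁻¹ * (RAAG.gen G b)⁻¹) *
        (RAAG.gen G b * RAAG.gen G a) := by group
    _ = RAAG.gen G b * RAAG.gen G a := by rw [h2, one_mul]

open Classical in
noncomputable def raagRetract (G : SimpleGraph V) (S : Set V) : RAAG G →* RAAG G :=
  PresentedGroup.toGroup (f := fun v => if v ∈ S then RAAG.gen G v else 1) (by
    rintro r ⟨a, b, hab, rfl⟩
    simp only [map_mul, map_inv, FreeGroup.lift_apply_of]
    by_cases ha : a ∈ S <;> by_cases hb : b ∈ S <;> simp [ha, hb]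
    rw [RAAG.gen_comm hab]; group)

open Classical in
lemma raagRetract_gen (G : SimpleGraph V) (S : Set V) (v : V) :
    raagRetract G S (RAAG.gen G v) = if v ∈ S then RAAG.gen G v else 1 :=
  PresentedGroup.toGroup.of _

lemma raagRetract_fix (G : SimpleGraph V) (S : Set V) {g : RAAG G}
    (hg : g ∈ Subgroup.closure (RAAG.gen G '' S)) : raagRetract G S g = g := by
  induction hg using Subgroup.closure_induction with
  | mem x hx => obtain ⟨v, hv, rfl⟩ := hx; simp [raagRetract_gen, hv]
  | one => simp
  | mul x y _ _ hx hy => simp [hx, hy]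
  | inv x _ hx => simp [hx]

open Classical in
lemma raagRetract_wordProd (G : SimpleGraph V) (S : Set V) (w : List (V × Bool)) :
    raagRetract G S (wordProd G w) = wordProd G (w.filter fun p => p.1 ∈ S) := by
  induction w with
  | nil => simp [wordProd]
  | cons p w ih =>
    have hcons : wordProd G (p :: w) =
        (if p.2 then RAAG.gen G p.1 else (RAAG.gen G p.1)⁻¹) * wordProd G w := by
      simp [wordProd]
    rw [hcons, map_mul, ih]
    by_cases hp : p.1 ∈ S
    · have : (p :: w).filter (fun p => p.1 ∈ S) =
          p :: w.filter (fun p => p.1 ∈ S) := by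
        simp [List.filter_cons, hp]
      rw [this]
      have : wordProd G (p :: w.filter fun p => p.1 ∈ S) =
          (if p.2 then RAAG.gen G p.1 else (RAAG.gen G p.1)⁻¹) *
          wordProd G (w.filter fun p => p.1 ∈ S) := by simp [wordProd]
      rw [this]
      congr 1
      by_cases hb : p.2 <;> simp [hb, raagRetract_gen, hp]
    · have : (p :: w).filter (fun p => p.1 ∈ S) = w.filter (fun p => p.1 ∈ S) := by
        simp [List.filter_cons, hp]
      rw [this]
      have : raagRetract G S (if p.2 then RAAG.gen G p.1 else (RAAG.gen G p.1)⁻¹) = 1 := by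
        by_cases hb : p.2 <;> simp [hb, raagRetract_gen, hp]
      rw [this, one_mul]

theorem reduced_word_in_subgroup_has_letters_in_S {V : Type*} (G : SimpleGraph V) (S : Set V)
    (w : List (V × Bool)) (hred : IsReducedWord G w)
    (hmem : wordProd G w ∈ Subgroup.closure (RAAG.gen G '' S)) :
    ∀ p ∈ w, p.1 ∈ S := by
  classical
  have key : wordProd G (w.filter fun p => p.1 ∈ S) = wordProd G w := by
    rw [← raagRetract_wordProd, raagRetract_fix G S hmem]
  have hlen := hred _ key
  have hsub : (w.filter fun p => p.1 ∈ S).Sublist w := List.filter_sublist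
  have heq : w.filter (fun p => p.1 ∈ S) = w :=
    hsub.eq_of_length (le_antisymm hsub.length_le hlen)
  intro p hp
  have := List.of_mem_filter (heq ▸ hp)
  simpa using this
end
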